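/- arXiv:0809.4410 — 4 statements merged into one kernel-verified Lean document; each statement's English description precedes it below -/
import Mathlib

section
/- A coalgebra C is left quasi-coFrobenius if and only if every rational left C*-module (equivalently, every right C-comodule viewed as a left C*-module) embeds in a free left C*-module. -/
open TensorProduct

noncomputable section
namespace Paper

variable (k : Type) [Field k]
variable (C : Type) [AddCommGroup C] [Module k C] [Coalgebra k C]

/-- The convolution product on the dual algebra `C*`. -/
def conv (f g : Module.Dual k C) : Module.Dual k C :=
  (TensorProduct.lid k k).toLinearMap ∘ₗ TensorProduct.map f g ∘ₗ Coalgebra.comul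

variable {M : Type} [AddCommGroup M] [Module k M]

/-- The left `C*`-action `f ⇀ m = ∑ m₀ f(m₁)` on a right `C`-comodule `(M, ρ)`. -/
def dualAct (ρ : M →ₗ[k] M ⊗[k] C) (f : Module.Dual k C) : M →ₗ[k] M :=
  (TensorProduct.rid k M).toLinearMap ∘ₗ TensorProduct.map LinearMap.id f ∘ₗ ρ

/-- `ρ : M → M ⊗ C` is a right `C`-comodule structure. -/
structure IsRightComodule (ρ : M →ₗ[k] M ⊗[k] C) : Prop where
  coassoc : (TensorProduct.assoc k M C C).toLinearMap ∘ₗ (TensorProduct.map ρ LinearMap.id) ∘ₗ ρ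
      = (TensorProduct.map LinearMap.id Coalgebra.comul) ∘ₗ ρ
  counit : (TensorProduct.rid k M).toLinearMap
      ∘ₗ (TensorProduct.map LinearMap.id Coalgebra.counit) ∘ₗ ρ = LinearMap.id

/-- The right `C`-comodule `(M, ρ)` embeds, as a left `C*`-module, in a free left `C*`-module. -/
def EmbedsInFree (ρ : M →ₗ[k] M ⊗[k] C) : Prop :=
  ∃ (I : Type) (Φ : M →ₗ[k] (I →₀ Module.Dual k C)), Function.Injective Φ ∧
    ∀ (f : Module.Dual k C) (m : M) (i : I),
      Φ (dualAct k C ρ f m) i = conv k C f (Φ m i)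

/-- `C` is left quasi-coFrobenius. -/
def LeftQcF : Prop := EmbedsInFree k C (Coalgebra.comul : C →ₗ[k] C ⊗[k] C)

/-- `C` is left f-qcF : every finite dimensional right `C`-comodule embeds, as a left
`C*`-module, in a free left `C*`-module. -/
def LeftfQcF : Prop :=
  ∀ (M : Type) [AddCommGroup M] [Module k M] (ρ : M →ₗ[k] M ⊗[k] C),
    IsRightComodule k C ρ → FiniteDimensional k M → EmbedsInFree k C ρ

/-- `lam : M → C ⊗ M` is a left `C`-comodule structure. -/
structure IsLeftComodule (lam : M →ₗ[k] C ⊗[k] M) : Prop where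
  coassoc : (TensorProduct.map LinearMap.id lam) ∘ₗ lam
      = (TensorProduct.assoc k C C M).toLinearMap
          ∘ₗ (TensorProduct.map Coalgebra.comul LinearMap.id) ∘ₗ lam
  counit : (TensorProduct.lid k M).toLinearMap
      ∘ₗ (TensorProduct.map Coalgebra.counit LinearMap.id) ∘ₗ lam = LinearMap.id

/-- The left coaction on the free left comodule `C^(I)`. -/
def freeCoaction (I : Type) : (I →₀ C) →ₗ[k] C ⊗[k] (I →₀ C) :=
  Finsupp.lsum k fun i =>
    (TensorProduct.map LinearMap.id (Finsupp.lsingle i)) ∘ₗ Coalgebra.comul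

/-- `C` is a generator of the category of its left comodules: every left `C`-comodule is an
epimorphic image of a coproduct `C^(I)` of copies of `C`. -/
def IsGeneratorLeftComodules : Prop :=
  ∀ (X : Type) [AddCommGroup X] [Module k X] (lamX : X →ₗ[k] C ⊗[k] X),
    IsLeftComodule k C lamX →
    ∃ (I : Type) (φ : (I →₀ C) →ₗ[k] X), Function.Surjective φ ∧
      (TensorProduct.map LinearMap.id φ) ∘ₗ freeCoaction k C I = lamX ∘ₗ φ

/-- A submodule `N` of a right comodule `(M, ρ)` is a subcomodule if `ρ(N) ⊆ N ⊗ C`. -/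
def IsSubcomodule (ρ : M →ₗ[k] M ⊗[k] C) (N : Submodule k M) : Prop :=
  ∀ n ∈ N, ρ n ∈ LinearMap.range (TensorProduct.map N.subtype (LinearMap.id (M := C)))

/-- A right comodule is simple if it is nonzero and has no proper nonzero subcomodules. -/
def IsSimpleComodule (ρ : M →ₗ[k] M ⊗[k] C) : Prop :=
  Nontrivial M ∧ ∀ N : Submodule k M, IsSubcomodule k C ρ N → N = ⊥ ∨ N = ⊤

/-- A morphism of right `C`-comodules. -/
def IsComodHom {N : Type} [AddCommGroup N] [Module k N]
    (ρM : M →ₗ[k] M ⊗[k] C) (ρN : N →ₗ[k] N ⊗[k] C) (φ : M →ₗ[k] N) : Prop :=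
  (TensorProduct.map φ LinearMap.id) ∘ₗ ρM = ρN ∘ₗ φ

/-- `(E, ρE)` is an injective object in the category of right `C`-comodules. -/
def IsInjectiveComodule {E : Type} [AddCommGroup E] [Module k E]
    (ρE : E →ₗ[k] E ⊗[k] C) : Prop :=
  ∀ (X Y : Type) [AddCommGroup X] [Module k X] [AddCommGroup Y] [Module k Y]
    (ρX : X →ₗ[k] X ⊗[k] C) (ρY : Y →ₗ[k] Y ⊗[k] C),
    IsRightComodule k C ρX → IsRightComodule k C ρY →
    ∀ g : X →ₗ[k] Y, IsComodHom k C ρX ρY g → Function.Injective g →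
    ∀ f : X →ₗ[k] E, IsComodHom k C ρX ρE f →
      ∃ h : Y →ₗ[k] E, IsComodHom k C ρY ρE h ∧ h ∘ₗ g = f

/-- `ι : M → E` exhibits `(E, ρE)` as an injective envelope of the right comodule `(M, ρM)`. -/
def IsInjectiveEnvelope {E : Type} [AddCommGroup E] [Module k E]
    (ρM : M →ₗ[k] M ⊗[k] C) (ρE : E →ₗ[k] E ⊗[k] C) (ι : M →ₗ[k] E) : Prop :=
  IsComodHom k C ρM ρE ι ∧ Function.Injective ι ∧ IsInjectiveComodule k C ρE ∧
    ∀ N : Submodule k E, IsSubcomodule k C ρE N → N ≠ ⊥ → LinearMap.range ι ⊓ N ≠ ⊥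

/-- `C` is left semiperfect: the injective envelope of every simple right `C`-comodule is
finite dimensional. -/
def LeftSemiperfect : Prop :=
  ∀ (M : Type) [AddCommGroup M] [Module k M] (ρM : M →ₗ[k] M ⊗[k] C),
    IsRightComodule k C ρM → IsSimpleComodule k C ρM →
    ∃ (E : Type) (_ : AddCommGroup E) (_ : Module k E)
      (ρE : E →ₗ[k] E ⊗[k] C) (ι : M →ₗ[k] E),
      IsRightComodule k C ρE ∧ IsInjectiveEnvelope k C ρM ρE ι ∧ FiniteDimensional k E

/-- A right coideal of `C`: a subspace `N` with `Δ(N) ⊆ N ⊗ C`. -/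
def IsRightCoideal (N : Submodule k C) : Prop :=
  ∀ x ∈ N, Coalgebra.comul (R := k) x ∈
    LinearMap.range (TensorProduct.map N.subtype (LinearMap.id (M := C)))

/-- The right coideal `N ⊆ C` embeds, as a left `C*`-module, in a free left `C*`-module. -/
def CoidealEmbedsInFree (N : Submodule k C) : Prop :=
  ∃ (J : Type) (Φ : N →ₗ[k] (J →₀ Module.Dual k C)), Function.Injective Φ ∧
    ∀ (f : Module.Dual k C) (x : C) (hx : x ∈ N)
      (hfx : dualAct k C (Coalgebra.comul (R := k)) f x ∈ N) (j : J),
      Φ ⟨dualAct k C (Coalgebra.comul (R := k)) f x, hfx⟩ j = conv k C f (Φ ⟨x, hx⟩ j)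

end Paper

/-! The coaction `ρ : M → M ⊗ C` is injective (by the counit axiom) and, by coassociativity,
intertwines `f ⇀ -` on `M` with `id ⊗ (f ⇀ -)` on `M ⊗ C`. Choosing a basis of `M`
identifies `M ⊗ C` with a direct sum of copies of `C`, so an embedding of `C` into a free
`C*`-module yields one of `M ⊗ C`, and hence of `M`. -/

namespace Paper

variable {k : Type} [Field k] {C : Type} [AddCommGroup C] [Module k C] [Coalgebra k C]
variable {M : Type} [AddCommGroup M] [Module k M]

theorem isRightComodule_comul : IsRightComodule k C (Coalgebra.comul : C →ₗ[k] C ⊗[k] C) where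
  coassoc := Coalgebra.coassoc
  counit := by
    ext c
    exact (congrArg (TensorProduct.rid k C) (Coalgebra.lTensor_counit_comul c)).trans (by simp)

theorem IsRightComodule.injective {ρ : M →ₗ[k] M ⊗[k] C} (hρ : IsRightComodule k C ρ) :
    Function.Injective ρ :=
  Function.LeftInverse.injective
    (g := (TensorProduct.rid k M).toLinearMap ∘ₗ Coalgebra.counit.lTensor M)
    (LinearMap.congr_fun hρ.counit)

theorem IsRightComodule.comp_dualAct {ρ : M →ₗ[k] M ⊗[k] C} (hρ : IsRightComodule k C ρ)
    (f : Module.Dual k C) :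
    ρ ∘ₗ dualAct k C ρ f = (dualAct k C Coalgebra.comul f).lTensor M ∘ₗ ρ := by
  have hρ_rid : ρ ∘ₗ (TensorProduct.rid k M).toLinearMap ∘ₗ f.lTensor M
      = (TensorProduct.rid k (M ⊗[k] C)).toLinearMap ∘ₗ f.lTensor (M ⊗[k] C)
          ∘ₗ ρ.rTensor C := by
    ext m c
    simp
  have hrid_assoc : (TensorProduct.rid k (M ⊗[k] C)).toLinearMap ∘ₗ f.lTensor (M ⊗[k] C)
      = ((TensorProduct.rid k C).toLinearMap ∘ₗ f.lTensor C).lTensor M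
          ∘ₗ (TensorProduct.assoc k M C C).toLinearMap := by
    apply TensorProduct.ext_threefold
    intro m c d
    simp [TensorProduct.smul_tmul', TensorProduct.tmul_smul]
  have hcoassoc : (TensorProduct.assoc k M C C).toLinearMap ∘ₗ ρ.rTensor C ∘ₗ ρ
      = (Coalgebra.comul (R := k) (A := C)).lTensor M ∘ₗ ρ := hρ.coassoc
  calc ρ ∘ₗ dualAct k C ρ f
      = (ρ ∘ₗ (TensorProduct.rid k M).toLinearMap ∘ₗ f.lTensor M) ∘ₗ ρ := rfl
    _ = ((TensorProduct.rid k C).toLinearMap ∘ₗ f.lTensor C).lTensor M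
          ∘ₗ (TensorProduct.assoc k M C C).toLinearMap ∘ₗ ρ.rTensor C ∘ₗ ρ := by
        rw [hρ_rid, ← LinearMap.comp_assoc (ρ.rTensor C), hrid_assoc]
        simp only [LinearMap.comp_assoc]
    _ = (dualAct k C Coalgebra.comul f).lTensor M ∘ₗ ρ := by
        rw [hcoassoc, ← LinearMap.comp_assoc, ← LinearMap.lTensor_comp]
        rfl

theorem exists_injective_lTensor_intertwining {X : Type} [AddCommGroup X] [Module k X]
    (a : Module.Dual k C → X →ₗ[k] X) {I : Type} (Φ : X →ₗ[k] (I →₀ Module.Dual k C))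
    (hΦ : Function.Injective Φ) (hΦa : ∀ f x i, Φ (a f x) i = conv k C f (Φ x i)) :
    ∃ (J : Type) (Ψ : M ⊗[k] X →ₗ[k] (J →₀ Module.Dual k C)), Function.Injective Ψ ∧
      ∀ f t j, Ψ ((a f).lTensor M t) j = conv k C f (Ψ t j) := by
  classical
  let b := Module.Basis.ofVectorSpace k M
  let E : M ⊗[k] X ≃ₗ[k] (Module.Basis.ofVectorSpaceIndex k M →₀ X) :=
    (TensorProduct.congr b.repr (LinearEquiv.refl k X)).trans
      (TensorProduct.finsuppScalarLeft k X _)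
  have hE : ∀ h : X →ₗ[k] X,
      E.toLinearMap ∘ₗ h.lTensor M = Finsupp.mapRange.linearMap h ∘ₗ E.toLinearMap := by
    intro h
    ext m x s
    simp [E, TensorProduct.finsuppScalarLeft_apply_tmul_apply]
  refine ⟨_ × I, (Finsupp.curryLinearEquiv k).symm.toLinearMap
      ∘ₗ Finsupp.mapRange.linearMap Φ ∘ₗ E.toLinearMap, ?_, ?_⟩
  · exact (Finsupp.curryLinearEquiv k).symm.injective.comp
      ((Finsupp.mapRange_injective _ Φ.map_zero hΦ).comp E.injective)
  · rintro f t ⟨s, i⟩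
    have hEs : E ((a f).lTensor M t) s = a f (E t s) :=
      congrArg (· s) (LinearMap.congr_fun (hE (a f)) t)
    simp [hEs, hΦa]

end Paper

/-- `C` is left quasi-coFrobenius iff every rational left `C*`-module
(equivalently, every right `C`-comodule viewed as a left `C*`-module via
`f ⇀ m = ∑ m₀ f(m₁)`) embeds in a free left `C*`-module. -/
theorem stmt2 (k : Type) [Field k] (C : Type) [AddCommGroup C] [Module k C] [Coalgebra k C] :
    Paper.LeftQcF k C ↔
      ∀ (M : Type) [AddCommGroup M] [Module k M] (ρ : M →ₗ[k] M ⊗[k] C),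
        Paper.IsRightComodule k C ρ → Paper.EmbedsInFree k C ρ := by
  refine ⟨fun ⟨I, Φ, hΦ, hΦconv⟩ M _ _ ρ hρ => ?_,
    fun h => h C _ Paper.isRightComodule_comul⟩
  obtain ⟨J, Ψ, hΨ, hΨconv⟩ :=
    Paper.exists_injective_lTensor_intertwining (M := M) _ Φ hΦ hΦconv
  refine ⟨J, Ψ ∘ₗ ρ, hΨ.comp hρ.injective, fun f m j => ?_⟩
  rw [LinearMap.comp_apply, ← LinearMap.comp_apply ρ, hρ.comp_dualAct, LinearMap.comp_apply,
    hΨconv, LinearMap.comp_apply]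
end
end

section
/- A coalgebra C is a generator of the category of its left comodules if and only if every finite dimensional right C-comodule embeds, as a left C*-module, in a free left C*-module. -/
open TensorProduct

noncomputable section
/-!
A linear map `ρ : M → M ⊗ C` is a right comodule exactly when `f ⇀ m = ∑ m₀ f(m₁)` is an
action of the convolution algebra `C*`; dually a left coaction corresponds to the right action
`x ↼ f = ∑ f(x₋₁) x₀`, and transposition turns a finite dimensional comodule on one side into
a comodule on the other. `C` generates the left comodules iff in every left comodule `X` the
images of the comodule maps `C → X` (the trace of `C` in `X`) span `X`.

If `C` is a generator and `M` is a finite dimensional right comodule, finitely many comodule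
maps `gᵢ : C → M*` have images spanning `M*`, and `m ↦ (c ↦ gᵢ c m)ᵢ` embeds `M` into `(C*)ⁿ`
as a `C*`-module. Conversely, every `x` in a left comodule lies in the finite dimensional
subcomodule `N = x ↼ C*`, and an embedding of the right comodule `N*` into a free `C*`-module
transposes to comodule maps `C → N` whose images span `N`.
-/

namespace Paper

open Module

section Slice

variable {k V W V' W' : Type} [Field k] [AddCommGroup V] [Module k V] [AddCommGroup W]
  [Module k W] [AddCommGroup V'] [Module k V'] [AddCommGroup W'] [Module k W']

def sliceLeft : Dual k V →ₗ[k] V ⊗[k] W →ₗ[k] W :=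
  LinearMap.llcomp k (V ⊗[k] W) (k ⊗[k] W) W (TensorProduct.lid k W).toLinearMap ∘ₗ
    LinearMap.rTensorHom W

def sliceRight : Dual k W →ₗ[k] V ⊗[k] W →ₗ[k] V :=
  LinearMap.llcomp k (V ⊗[k] W) (V ⊗[k] k) V (TensorProduct.rid k V).toLinearMap ∘ₗ
    LinearMap.lTensorHom V

@[simp] lemma sliceLeft_tmul (f : Dual k V) (v : V) (w : W) :
    sliceLeft f (v ⊗ₜ[k] w) = f v • w := by
  simp [sliceLeft]

@[simp] lemma sliceRight_tmul (g : Dual k W) (v : V) (w : W) :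
    sliceRight g (v ⊗ₜ[k] w) = g w • v := by
  simp [sliceRight]

lemma sliceLeft_lTensor (f : Dual k V) (u : W →ₗ[k] W') (x : V ⊗[k] W) :
    sliceLeft f (u.lTensor V x) = u (sliceLeft f x) := by
  induction x using TensorProduct.induction_on <;> simp_all

lemma sliceRight_rTensor (g : Dual k W) (u : V →ₗ[k] V') (x : V ⊗[k] W) :
    sliceRight g (u.rTensor W x) = u (sliceRight g x) := by
  induction x using TensorProduct.induction_on <;> simp_all

lemma apply_sliceRight (f : Dual k V) (g : Dual k W) (x : V ⊗[k] W) :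
    f (sliceRight g x) = g (sliceLeft f x) := by
  induction x using TensorProduct.induction_on <;> simp_all [mul_comm]

lemma eq_of_sliceLeft_eq {x y : V ⊗[k] W}
    (h : ∀ f : Dual k V, sliceLeft f x = sliceLeft f y) : x = y := by
  classical
  let b := Basis.ofVectorSpace k V
  refine (TensorProduct.equivFinsuppOfBasisLeft b).injective (Finsupp.ext fun i => ?_)
  simpa [TensorProduct.equivFinsuppOfBasisLeft_apply, sliceLeft] using h (b.coord i)

lemma eq_of_sliceRight_eq {x y : V ⊗[k] W}
    (h : ∀ g : Dual k W, sliceRight g x = sliceRight g y) : x = y := by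
  classical
  let b := Basis.ofVectorSpace k W
  refine (TensorProduct.equivFinsuppOfBasisRight b).injective (Finsupp.ext fun i => ?_)
  simpa [TensorProduct.equivFinsuppOfBasisRight_apply, sliceRight] using h (b.coord i)

lemma sliceLeft_comm_dualTensorHomEquiv_symm [FiniteDimensional k V] (f : Dual k W)
    (φ : V →ₗ[k] W) :
    sliceLeft f (TensorProduct.comm k _ _ ((dualTensorHomEquiv k V W).symm φ)) = f ∘ₗ φ := by
  obtain ⟨x, rfl⟩ := (dualTensorHomEquiv k V W).surjective φ
  rw [LinearEquiv.symm_apply_apply]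
  induction x using TensorProduct.induction_on with
  | zero => ext; simp
  | tmul β w => ext; simp [mul_comm]
  | add x y hx hy => ext; simp_all

lemma sliceRight_dualTensorHomEquiv_symm [FiniteDimensional k V] (f : Dual k W)
    (φ : V →ₗ[k] W) :
    sliceRight f ((dualTensorHomEquiv k V W).symm φ) = f ∘ₗ φ := by
  obtain ⟨x, rfl⟩ := (dualTensorHomEquiv k V W).surjective φ
  rw [LinearEquiv.symm_apply_apply]
  induction x using TensorProduct.induction_on with
  | zero => ext; simp
  | tmul β w => ext; simp [mul_comm]
  | add x y hx hy => ext; simp_all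

lemma mem_range_lTensor_subtype_of_sliceLeft_mem {N : Submodule k W} {y : V ⊗[k] W}
    (h : ∀ f : Dual k V, sliceLeft f y ∈ N) : y ∈ LinearMap.range (N.subtype.lTensor V) := by
  classical
  let b := Basis.ofVectorSpace k V
  let e := TensorProduct.equivFinsuppOfBasisLeft b (N := W)
  rw [← e.symm_apply_apply y, TensorProduct.equivFinsuppOfBasisLeft_symm_apply]
  refine Submodule.finsuppSum_mem _ _ _ _ fun i _ => ⟨b i ⊗ₜ ⟨e y i, ?_⟩, rfl⟩
  rw [TensorProduct.equivFinsuppOfBasisLeft_apply]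
  exact h (b.coord i)

lemma finiteDimensional_range_sliceLeft_flip (y : V ⊗[k] W) :
    FiniteDimensional k (LinearMap.range (sliceLeft.flip y)) := by
  obtain ⟨c, rfl⟩ := TensorProduct.eq_repr_basis_left (Basis.ofVectorSpace k V) y
  have := FiniteDimensional.span_of_finite k (c.support.finite_toSet.image c)
  refine Submodule.finiteDimensional_of_le (?_ : _ ≤ Submodule.span k (c '' c.support))
  rintro _ ⟨f, rfl⟩
  rw [LinearMap.flip_apply, map_finsuppSum]
  refine Submodule.finsuppSum_mem _ _ _ _ fun i hi => ?_
  rw [sliceLeft_tmul]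
  exact Submodule.smul_mem _ _ (Submodule.subset_span ⟨i, Finsupp.mem_support_iff.mpr hi, rfl⟩)

end Slice

section Coaction

variable {k C M X Y Z : Type} [Field k] [AddCommGroup C] [Module k C] [AddCommGroup M]
  [Module k M] [AddCommGroup X] [Module k X] [AddCommGroup Y] [Module k Y] [AddCommGroup Z]
  [Module k Z]

def rightDualAct (lam : M →ₗ[k] C ⊗[k] M) (f : Dual k C) : M →ₗ[k] M :=
  sliceLeft f ∘ₗ lam

def IsLeftComodHom (lamX : X →ₗ[k] C ⊗[k] X) (lamY : Y →ₗ[k] C ⊗[k] Y) (φ : X →ₗ[k] Y) :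
    Prop :=
  TensorProduct.map LinearMap.id φ ∘ₗ lamX = lamY ∘ₗ φ

section LeftComodHom

variable {lamX : X →ₗ[k] C ⊗[k] X} {lamY : Y →ₗ[k] C ⊗[k] Y} {φ : X →ₗ[k] Y}

theorem isLeftComodHom_iff : IsLeftComodHom lamX lamY φ ↔
    ∀ f x, φ (rightDualAct lamX f x) = rightDualAct lamY f (φ x) := by
  refine ⟨fun h f x => ?_, fun h => LinearMap.ext fun x => eq_of_sliceLeft_eq fun f => ?_⟩
  · rw [rightDualAct, LinearMap.comp_apply, ← sliceLeft_lTensor]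
    exact congrArg (sliceLeft f) (LinearMap.congr_fun h x)
  · exact (sliceLeft_lTensor f φ (lamX x)).trans (h f x)

lemma IsLeftComodHom.comp {lamZ : Z →ₗ[k] C ⊗[k] Z} {ψ : Y →ₗ[k] Z}
    (hψ : IsLeftComodHom lamY lamZ ψ) (hφ : IsLeftComodHom lamX lamY φ) :
    IsLeftComodHom lamX lamZ (ψ ∘ₗ φ) := by
  rw [IsLeftComodHom, ← LinearMap.comp_assoc, ← hψ, LinearMap.comp_assoc, ← hφ,
    ← LinearMap.comp_assoc, ← TensorProduct.map_comp, LinearMap.id_comp]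

end LeftComodHom

section Dual

variable [FiniteDimensional k M]

def dualLeftCoaction (ρ : M →ₗ[k] M ⊗[k] C) : Dual k M →ₗ[k] C ⊗[k] Dual k M :=
  (TensorProduct.comm k _ _).toLinearMap ∘ₗ (dualTensorHomEquiv k M C).symm.toLinearMap ∘ₗ
    LinearMap.lcomp k C ρ ∘ₗ sliceLeft

lemma rightDualAct_dualLeftCoaction (ρ : M →ₗ[k] M ⊗[k] C) (f : Dual k C) (α : Dual k M) :
    rightDualAct (dualLeftCoaction ρ) f α = α ∘ₗ dualAct k C ρ f := by
  ext m
  change (sliceLeft f (TensorProduct.comm k _ _ ((dualTensorHomEquiv k M C).symm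
    (sliceLeft α ∘ₗ ρ)))) m = α (sliceRight f (ρ m))
  rw [sliceLeft_comm_dualTensorHomEquiv_symm, apply_sliceRight]
  rfl

def dualRightCoaction (lam : M →ₗ[k] C ⊗[k] M) : Dual k M →ₗ[k] Dual k M ⊗[k] C :=
  (dualTensorHomEquiv k M C).symm.toLinearMap ∘ₗ LinearMap.lcomp k C lam ∘ₗ sliceRight

lemma dualAct_dualRightCoaction (lam : M →ₗ[k] C ⊗[k] M) (f : Dual k C) (α : Dual k M) :
    dualAct k C (dualRightCoaction lam) f α = α ∘ₗ rightDualAct lam f := by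
  ext m
  change (sliceRight f ((dualTensorHomEquiv k M C).symm (sliceRight α ∘ₗ lam))) m
    = α (sliceLeft f (lam m))
  rw [sliceRight_dualTensorHomEquiv_symm, LinearMap.comp_apply, LinearMap.comp_apply,
    apply_sliceRight]

end Dual

end Coaction

section Coalgebra

variable {k C M X Y : Type} [Field k] [AddCommGroup C] [Module k C] [Coalgebra k C]
  [AddCommGroup M] [Module k M] [AddCommGroup X] [Module k X] [AddCommGroup Y] [Module k Y]

local notation "Δ" => (Coalgebra.comul : C →ₗ[k] C ⊗[k] C)
local notation "ε" => (Coalgebra.counit : C →ₗ[k] k)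

lemma conv_apply (f g : Dual k C) (c : C) : conv k C f g c = g (sliceLeft f (Δ c)) := by
  change TensorProduct.lid k k (TensorProduct.map f g (Δ c)) = _
  induction Δ c using TensorProduct.induction_on <;> simp_all

lemma sliceRight_sliceRight_assoc_symm_comul (f g : Dual k C) (y : M ⊗[k] C) :
    sliceRight f (sliceRight g ((TensorProduct.assoc k M C C).symm (LinearMap.lTensor M Δ y)))
      = sliceRight (conv k C f g) y := by
  induction y using TensorProduct.induction_on with
  | zero => simp
  | add x y hx hy => simp_all
  | tmul m c =>
    rw [LinearMap.lTensor_tmul, sliceRight_tmul, conv_apply]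
    induction Δ c using TensorProduct.induction_on with
    | zero => simp
    | tmul c₁ c₂ => simp [smul_smul, mul_comm]
    | add x y hx hy => simp only [TensorProduct.tmul_add, map_add, hx, hy, add_smul]

lemma sliceLeft_sliceLeft_assoc_comul (f g : Dual k C) (y : C ⊗[k] M) :
    sliceLeft g (sliceLeft f (TensorProduct.assoc k C C M (LinearMap.rTensor M Δ y)))
      = sliceLeft (conv k C f g) y := by
  induction y using TensorProduct.induction_on with
  | zero => simp
  | add x y hx hy => simp_all
  | tmul c m =>
    rw [LinearMap.rTensor_tmul, sliceLeft_tmul, conv_apply]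
    induction Δ c using TensorProduct.induction_on with
    | zero => simp
    | tmul c₁ c₂ => simp [smul_smul]
    | add x y hx hy => simp only [TensorProduct.add_tmul, map_add, hx, hy, add_smul]

theorem isRightComodule_iff {ρ : M →ₗ[k] M ⊗[k] C} :
    IsRightComodule k C ρ ↔
      (∀ f g m, dualAct k C ρ f (dualAct k C ρ g m) = dualAct k C ρ (conv k C f g) m) ∧
        ∀ m, dualAct k C ρ ε m = m := by
  have hcoassoc : ∀ m,
      TensorProduct.assoc k M C C (ρ.rTensor C (ρ m)) = LinearMap.lTensor M Δ (ρ m) ↔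
      ∀ f g, dualAct k C ρ f (dualAct k C ρ g m) = dualAct k C ρ (conv k C f g) m := fun m => by
    have key : ∀ f g, sliceRight f (sliceRight g (ρ.rTensor C (ρ m)))
        = dualAct k C ρ f (dualAct k C ρ g m) := fun f g => by
      rw [sliceRight_rTensor]; rfl
    rw [← LinearEquiv.eq_symm_apply]
    refine ⟨fun h f g => ?_, fun h => eq_of_sliceRight_eq fun g => eq_of_sliceRight_eq fun f => ?_⟩
    · rw [← key, h, sliceRight_sliceRight_assoc_symm_comul]; rfl
    · rw [key, sliceRight_sliceRight_assoc_symm_comul, h]; rfl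
  exact ⟨fun h => ⟨fun f g m => (hcoassoc m).mp (LinearMap.congr_fun h.coassoc m) f g,
      LinearMap.congr_fun h.counit⟩,
    fun h => ⟨LinearMap.ext fun m => (hcoassoc m).mpr (h.1 · · m), LinearMap.ext h.2⟩⟩

theorem isLeftComodule_iff {lam : M →ₗ[k] C ⊗[k] M} :
    IsLeftComodule k C lam ↔
      (∀ f g m, rightDualAct lam g (rightDualAct lam f m) = rightDualAct lam (conv k C f g) m) ∧
        ∀ m, rightDualAct lam ε m = m := by
  have hcoassoc : ∀ m,
      lam.lTensor C (lam m) = TensorProduct.assoc k C C M (LinearMap.rTensor M Δ (lam m)) ↔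
      ∀ f g, rightDualAct lam g (rightDualAct lam f m) = rightDualAct lam (conv k C f g) m :=
    fun m => by
    have key : ∀ f g, sliceLeft g (sliceLeft f (lam.lTensor C (lam m)))
        = rightDualAct lam g (rightDualAct lam f m) := fun f g => by
      rw [sliceLeft_lTensor]; rfl
    refine ⟨fun h f g => ?_, fun h => eq_of_sliceLeft_eq fun f => eq_of_sliceLeft_eq fun g => ?_⟩
    · rw [← key, h, sliceLeft_sliceLeft_assoc_comul]; rfl
    · rw [key, sliceLeft_sliceLeft_assoc_comul, h]; rfl
  exact ⟨fun h => ⟨fun f g m => (hcoassoc m).mp (LinearMap.congr_fun h.coassoc m) f g,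
      LinearMap.congr_fun h.counit⟩,
    fun h => ⟨LinearMap.ext fun m => (hcoassoc m).mpr (h.1 · · m), LinearMap.ext h.2⟩⟩

theorem IsLeftComodule.of_injective {lamX : X →ₗ[k] C ⊗[k] X} {lamY : Y →ₗ[k] C ⊗[k] Y}
    {φ : X →ₗ[k] Y} (hY : IsLeftComodule k C lamY) (hφ : IsLeftComodHom lamX lamY φ)
    (hinj : Function.Injective φ) : IsLeftComodule k C lamX := by
  obtain ⟨hconv, hcounit⟩ := isLeftComodule_iff.mp hY
  rw [isLeftComodHom_iff] at hφ
  exact isLeftComodule_iff.mpr ⟨fun f g x => hinj (by simp only [hφ, hconv]),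
    fun x => hinj (by rw [hφ, hcounit])⟩

theorem isLeftComodHom_freeCoaction_iff {I : Type} {lamX : X →ₗ[k] C ⊗[k] X}
    {φ : (I →₀ C) →ₗ[k] X} : IsLeftComodHom (freeCoaction k C I) lamX φ ↔
      ∀ i, IsLeftComodHom Δ lamX (φ ∘ₗ Finsupp.lsingle i) := by
  have hcomp : ∀ i, (TensorProduct.map LinearMap.id φ ∘ₗ freeCoaction k C I) ∘ₗ
      Finsupp.lsingle i = TensorProduct.map LinearMap.id (φ ∘ₗ Finsupp.lsingle i) ∘ₗ Δ :=
    fun i => by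
    rw [LinearMap.comp_assoc, freeCoaction, Finsupp.lsum_comp_lsingle, ← LinearMap.comp_assoc,
      ← TensorProduct.map_comp, LinearMap.id_comp]
  refine ⟨fun h i => ?_, fun h => Finsupp.lhom_ext' fun i => ?_⟩
  · rw [IsLeftComodHom, ← hcomp i, h, LinearMap.comp_assoc]
  · rw [hcomp i, h i, LinearMap.comp_assoc]

def comodTrace (lamX : X →ₗ[k] C ⊗[k] X) : Submodule k X :=
  ⨆ g : {g : C →ₗ[k] X // IsLeftComodHom Δ lamX g}, LinearMap.range g.1

lemma range_le_comodTrace {lamX : X →ₗ[k] C ⊗[k] X} {g : C →ₗ[k] X}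
    (hg : IsLeftComodHom Δ lamX g) : LinearMap.range g ≤ comodTrace lamX :=
  le_iSup (fun g : {g // IsLeftComodHom Δ lamX g} => LinearMap.range g.1) ⟨g, hg⟩

lemma IsLeftComodHom.map_comodTrace_le {lamX : X →ₗ[k] C ⊗[k] X} {lamY : Y →ₗ[k] C ⊗[k] Y}
    {φ : X →ₗ[k] Y} (hφ : IsLeftComodHom lamX lamY φ) :
    (comodTrace lamX).map φ ≤ comodTrace lamY := by
  rw [comodTrace, Submodule.map_iSup]
  exact iSup_le fun g => by rw [← LinearMap.range_comp]; exact range_le_comodTrace (hφ.comp g.2)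

theorem isGeneratorLeftComodules_iff : IsGeneratorLeftComodules k C ↔
    ∀ (X : Type) [AddCommGroup X] [Module k X] (lamX : X →ₗ[k] C ⊗[k] X),
      IsLeftComodule k C lamX → comodTrace lamX = ⊤ := by
  constructor
  · intro h X _ _ lamX hX
    obtain ⟨I, φ, hsurj, hφ⟩ := h X lamX hX
    rw [eq_top_iff, ← LinearMap.range_eq_top.mpr hsurj, LinearMap.range_eq_map,
      ← Finsupp.iSup_lsingle_range, Submodule.map_iSup]
    refine iSup_le fun i => ?_
    rw [← LinearMap.range_comp]
    exact range_le_comodTrace (isLeftComodHom_freeCoaction_iff.mp hφ i)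
  · intro h X _ _ lamX hX
    refine ⟨{g : C →ₗ[k] X // IsLeftComodHom Δ lamX g}, Finsupp.lsum k fun g => g.1, ?_,
      isLeftComodHom_freeCoaction_iff.mpr fun g => by rw [Finsupp.lsum_comp_lsingle]; exact g.2⟩
    rw [← LinearMap.range_eq_top, eq_top_iff, ← h X lamX hX]
    refine iSup_le fun g => ?_
    rw [← Finsupp.lsum_comp_lsingle k (fun g => g.1) g]
    exact LinearMap.range_comp_le_range _ _

theorem IsLeftComodule.exists_finiteDimensional_subcomodule {lamX : X →ₗ[k] C ⊗[k] X}
    (hX : IsLeftComodule k C lamX) (x : X) :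
    ∃ N : Submodule k X, FiniteDimensional k N ∧ x ∈ N ∧
      ∃ lamN : N →ₗ[k] C ⊗[k] N, IsLeftComodule k C lamN ∧ IsLeftComodHom lamN lamX N.subtype := by
  obtain ⟨hconv, hcounit⟩ := isLeftComodule_iff.mp hX
  set N := LinearMap.range (sliceLeft.flip (lamX x))
  have hstable : ∀ f, ∀ n ∈ N, rightDualAct lamX f n ∈ N := by
    rintro f _ ⟨g, rfl⟩
    exact ⟨conv k C g f, (hconv g f x).symm⟩
  -- `C ⊗ N → C ⊗ X` is injective, so `lamX` restricts to `N` through a left inverse of it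
  obtain ⟨r, hr⟩ := (N.subtype.lTensor C).exists_leftInverse_of_injective <|
    LinearMap.ker_eq_bot.mpr <| Module.Flat.lTensor_preserves_injective_linearMap _
      N.injective_subtype
  have hN : IsLeftComodHom (r ∘ₗ lamX ∘ₗ N.subtype) lamX N.subtype := LinearMap.ext fun n => by
    obtain ⟨z, hz⟩ := mem_range_lTensor_subtype_of_sliceLeft_mem fun f => hstable f n n.2
    change N.subtype.lTensor C (r (lamX n)) = lamX n
    rw [← hz, ← LinearMap.comp_apply r, hr, LinearMap.id_apply]
  exact ⟨N, finiteDimensional_range_sliceLeft_flip _, ⟨ε, hcounit x⟩, _,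
    hX.of_injective hN N.injective_subtype, hN⟩

section Dual

variable [FiniteDimensional k M]

theorem IsRightComodule.dualLeftCoaction {ρ : M →ₗ[k] M ⊗[k] C} (hρ : IsRightComodule k C ρ) :
    IsLeftComodule k C (dualLeftCoaction ρ) := by
  obtain ⟨hconv, hcounit⟩ := isRightComodule_iff.mp hρ
  refine isLeftComodule_iff.mpr ⟨fun f g α => ?_, fun α => ?_⟩ <;>
    ext m <;> simp [rightDualAct_dualLeftCoaction, hconv, hcounit]

theorem IsLeftComodule.dualRightCoaction {lam : M →ₗ[k] C ⊗[k] M}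
    (hlam : IsLeftComodule k C lam) : IsRightComodule k C (dualRightCoaction lam) := by
  obtain ⟨hconv, hcounit⟩ := isLeftComodule_iff.mp hlam
  refine isRightComodule_iff.mpr ⟨fun f g α => ?_, fun α => ?_⟩ <;>
    ext m <;> simp [dualAct_dualRightCoaction, hconv, hcounit]

lemma embedsInFree_of_iSup_range_eq_top {ρ : M →ₗ[k] M ⊗[k] C} {ι : Type} [Finite ι]
    (g : ι → C →ₗ[k] Dual k M) (hg : ∀ i, IsLeftComodHom Δ (dualLeftCoaction ρ) (g i))
    (hspan : ⨆ i, LinearMap.range (g i) = ⊤) : EmbedsInFree k C ρ := by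
  refine ⟨ι, (Finsupp.linearEquivFunOnFinite k (Dual k C) ι).symm.toLinearMap ∘ₗ
    LinearMap.pi fun i => (g i).flip, (injective_iff_map_eq_zero _).mpr fun m hm => ?_,
    fun f m i => LinearMap.ext fun c => ?_⟩
  · have hker : ⨆ i, LinearMap.range (g i) ≤ LinearMap.ker (Dual.eval k M m) :=
      iSup_le fun i => by
        rintro _ ⟨c, rfl⟩
        exact congrArg (· i c) hm
    rw [hspan] at hker
    exact (forall_dual_apply_eq_zero_iff k m).mp fun α => hker Submodule.mem_top
  · have h := congrArg (· m) (isLeftComodHom_iff.mp (hg i) f c)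
    rw [rightDualAct_dualLeftCoaction] at h
    change g i c (dualAct k C ρ f m) = conv k C f ((g i).flip m) c
    rw [conv_apply, LinearMap.flip_apply]
    exact h.symm

lemma comodTrace_eq_top_of_embedsInFree {lam : M →ₗ[k] C ⊗[k] M}
    (hemb : EmbedsInFree k C (dualRightCoaction lam)) : comodTrace lam = ⊤ := by
  obtain ⟨J, Φ, hinj, hΦ⟩ := hemb
  let g : J → C →ₗ[k] M := fun j =>
    (evalEquiv k M).symm.toLinearMap ∘ₗ (Finsupp.lapply j ∘ₗ Φ).flip
  have hg : ∀ j c α, α (g j c) = Φ α j c := fun j c α => apply_evalEquiv_symm_apply k M _ _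
  have hcomod : ∀ j, IsLeftComodHom Δ lam (g j) := fun j => isLeftComodHom_iff.mpr fun f c =>
    eval_apply_injective k <| LinearMap.ext fun α => by
      simp only [Dual.eval_apply]
      rw [hg]
      change Φ α j (sliceLeft f (Δ c)) = α (rightDualAct lam f (g j c))
      rw [← conv_apply, ← hΦ, ← hg, dualAct_dualRightCoaction, LinearMap.comp_apply]
  rw [← Submodule.dualAnnihilator_eq_bot_iff, eq_bot_iff]
  intro α hα
  rw [Submodule.mem_dualAnnihilator] at hα
  refine hinj (Finsupp.ext fun j => LinearMap.ext fun c => ?_)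
  rw [← hg, hα _ (range_le_comodTrace (hcomod j) ⟨c, rfl⟩), map_zero]
  rfl

end Dual

theorem leftfQcF_of_isGeneratorLeftComodules (h : IsGeneratorLeftComodules k C) :
    LeftfQcF k C := by
  intro M _ _ ρ hρ _
  have htop := isGeneratorLeftComodules_iff.mp h _ _ hρ.dualLeftCoaction
  obtain ⟨t, ht⟩ := CompleteLattice.IsCompactElement.exists_finset_of_le_iSup _
    ((Submodule.fg_iff_compact ⊤).mp Module.Finite.fg_top) _ htop.ge
  rw [iSup_subtype'] at ht
  exact embedsInFree_of_iSup_range_eq_top (fun i : t => i.1.1) (fun i => i.1.2) (top_unique ht)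

theorem isGeneratorLeftComodules_of_leftfQcF (h : LeftfQcF k C) :
    IsGeneratorLeftComodules k C := by
  refine isGeneratorLeftComodules_iff.mpr fun X _ _ lamX hX => eq_top_iff.mpr fun x _ => ?_
  obtain ⟨N, _, hxN, lamN, hN, hsub⟩ := hX.exists_finiteDimensional_subcomodule x
  have htop := comodTrace_eq_top_of_embedsInFree (h _ _ hN.dualRightCoaction inferInstance)
  exact hsub.map_comodTrace_le ⟨⟨x, hxN⟩, htop ▸ Submodule.mem_top, rfl⟩

end Coalgebra

end Paper

/-- `C` generates the category of its left comodules iff every finite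
dimensional right `C`-comodule embeds, as a left `C*`-module, in a free left `C*`-module
(i.e. `C` is left f-qcF). -/
theorem stmt3 (k : Type) [Field k] (C : Type) [AddCommGroup C] [Module k C] [Coalgebra k C] :
    Paper.IsGeneratorLeftComodules k C ↔ Paper.LeftfQcF k C :=
  ⟨Paper.leftfQcF_of_isGeneratorLeftComodules, Paper.isGeneratorLeftComodules_of_leftfQcF⟩
end
end

section
/- Let C be a coalgebra, q ∈ C, and I = { f ∈ C* : f ⇀ q = 0 } be the annihilator of q in C*. If there exists a subset X ⊆ C* such that I equals the left annihilator l(X) = { f ∈ C* : fx = 0 for all x ∈ X }, then the cyclic left C*-module generated by q (equivalently, the right coideal of C generated by q) embeds in a free left C*-module of finite rank. -/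
/-!
The map `f ↦ f ⇀ q` identifies the cyclic module `C* ⇀ q` with `C*/I`; it is finite dimensional
because `f ⇀ q` is a combination of the finitely many left tensor factors of `Δ q`. Since
`I = l(X)`, each `f ⇀ q ↦ f * x` with `x ∈ X` is well defined and these maps are jointly
injective, so (by the descending chain condition) finitely many `x₁, …, xₙ` already are. The
resulting embedding into `(C*)ⁿ` is `C*`-linear because convolution is associative and
`(f * g) ⇀ q = f ⇀ (g ⇀ q)`.
-/

open TensorProduct

noncomputable section
namespace LinearMap

variable {R A M P : Type*} [Ring R] [AddCommGroup A] [Module R A] [AddCommGroup M] [Module R M]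
  [AddCommGroup P] [Module R P]

def rangeLift (π : A →ₗ[R] M) (T : A →ₗ[R] P) (h : ker π ≤ ker T) : range π →ₗ[R] P :=
  (ker π).liftQ T h ∘ₗ π.quotKerEquivRange.symm.toLinearMap

lemma rangeLift_apply (π : A →ₗ[R] M) (T : A →ₗ[R] P) (h : ker π ≤ ker T) {x : range π} {a : A}
    (ha : π a = x) : π.rangeLift T h x = T a := by
  have : π.quotKerEquivRange.symm x = Submodule.Quotient.mk a :=
    π.quotKerEquivRange.symm_apply_eq.mpr (Subtype.ext (by simp [ha]))
  simp [rangeLift, this]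

lemma rangeLift_injective (π : A →ₗ[R] M) (T : A →ₗ[R] P) (h : ker π = ker T) :
    Function.Injective (π.rangeLift T h.le) := by
  rw [rangeLift, coe_comp, LinearEquiv.coe_coe]
  exact (ker_eq_bot.mp (Submodule.ker_liftQ_eq_bot _ _ _ h.ge)).comp
    π.quotKerEquivRange.symm.injective

open CompleteLattice in
theorem exists_fin_injective_pi_of_iInf_ker_eq_bot {V ι : Type*} [AddCommGroup V] [Module R V]
    [IsArtinian R V] (T : ι → V →ₗ[R] P) (hT : ⨅ i, ker (T i) = ⊥) :
    ∃ (n : ℕ) (x : Fin n → ι), Function.Injective (pi fun j => T (x j)) := by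
  -- DCC on submodules makes every element of the dual lattice compact, `⊥` in particular.
  have hcompact : IsCompactElement (OrderDual.toDual (⊥ : Submodule R V)) :=
    (isSupFiniteCompact_iff_all_elements_compact _).mp (WellFoundedGT.isSupFiniteCompact _) _
  obtain ⟨s, hs⟩ := hcompact.exists_finset_of_le_iSup _
    (fun i => OrderDual.toDual (ker (T i))) hT.le
  refine ⟨s.card, fun j => s.equivFin.symm j, ?_⟩
  rw [← ker_eq_bot, ker_pi, eq_bot_iff]
  refine le_trans (le_iInf₂ fun i hi => iInf_le_of_le (s.equivFin ⟨i, hi⟩) ?_) hs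
  simp only [Equiv.symm_apply_apply]
  exact le_rfl

theorem exists_fin_ker_pi_eq_of_ker_eq_iInf {ι : Type*} (π : A →ₗ[R] M)
    [IsArtinian R (range π)] (T : ι → A →ₗ[R] P) (h : ker π = ⨅ i, ker (T i)) :
    ∃ (n : ℕ) (x : Fin n → ι), ker (pi fun j => T (x j)) = ker π := by
  have hle (i : ι) : ker π ≤ ker (T i) := h.trans_le (iInf_le _ i)
  have hbot : ⨅ i, ker (π.rangeLift (T i) (hle i)) = ⊥ := by
    refine eq_bot_iff.mpr fun x hx => ?_
    obtain ⟨a, ha⟩ := x.2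
    simp only [Submodule.mem_iInf, mem_ker, rangeLift_apply _ _ _ ha] at hx
    have haπ : a ∈ ker π := h ▸ Submodule.mem_iInf _ |>.mpr hx
    simpa [← ha, Subtype.ext_iff] using haπ
  obtain ⟨n, x, hx⟩ := exists_fin_injective_pi_of_iInf_ker_eq_bot _ hbot
  refine ⟨n, x, le_antisymm (fun a ha => ?_) (by simp [ker_pi, hle])⟩
  have hπa : (⟨π a, a, rfl⟩ : range π) = 0 := hx <| funext fun j => by
    simpa [rangeLift_apply (x := ⟨π a, a, rfl⟩) _ _ _ rfl] using congrFun ha j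
  simpa [Subtype.ext_iff] using hπa

end LinearMap

namespace Paper

open Coalgebra WithConv

variable {k : Type} [Field k] {C : Type} [AddCommGroup C] [Module k C] [Coalgebra k C]

lemma conv_eq_ofConv_mul (f g : Module.Dual k C) :
    conv k C f g = (toConv f * toConv g).ofConv := by
  rw [LinearMap.convMul_def, conv]
  congr 1

lemma conv_assoc (f g h : Module.Dual k C) :
    conv k C (conv k C f g) h = conv k C f (conv k C g h) := by
  simp only [conv_eq_ofConv_mul, toConv_ofConv, mul_assoc]

lemma dual_apply_dualAct_comul (h f : Module.Dual k C) (c : C) :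
    h (dualAct k C comul f c) = conv k C h f c := by
  simp only [dualAct, conv, LinearMap.comp_apply]
  induction comul (R := k) c using TensorProduct.induction_on with
  | zero => simp
  | tmul a b => simp [mul_comm]
  | add x y hx hy => simp_all

lemma dualAct_conv (f g : Module.Dual k C) (c : C) :
    dualAct k C comul (conv k C f g) c = dualAct k C comul f (dualAct k C comul g c) :=
  Module.eval_apply_injective k <| LinearMap.ext fun h => by
    simp only [Module.Dual.eval_apply, dual_apply_dualAct_comul, ← conv_assoc]

lemma dualAct_comul_eq_sum {ι : Type*} (f : Module.Dual k C) {c : C} (r : Coalgebra.Repr k c ι) :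
    dualAct k C comul f c = ∑ i ∈ r.index, f (r.right i) • r.left i := by
  simp [dualAct, ← r.eq]

def convRight (x : Module.Dual k C) : Module.Dual k C →ₗ[k] Module.Dual k C where
  toFun f := conv k C f x
  map_add' f g := by simp [conv_eq_ofConv_mul, add_mul]
  map_smul' a f := by simp [conv_eq_ofConv_mul, smul_mul_assoc]

@[simp]
lemma convRight_apply (x f : Module.Dual k C) : convRight x f = conv k C f x := rfl

def orbitMap (q : C) : Module.Dual k C →ₗ[k] C where
  toFun f := dualAct k C comul f q
  map_add' f g := by simp [dualAct, TensorProduct.map_add_right]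
  map_smul' a f := by simp [dualAct, TensorProduct.map_smul_right]

@[simp]
lemma orbitMap_apply (q : C) (f : Module.Dual k C) : orbitMap q f = dualAct k C comul f q := rfl

lemma range_orbitMap (q : C) :
    LinearMap.range (orbitMap q) = Submodule.span k (Set.range fun f => dualAct k C comul f q) :=
  (Submodule.span_eq _).symm

instance finiteDimensional_range_orbitMap (q : C) :
    FiniteDimensional k (LinearMap.range (orbitMap (k := k) q)) := by
  classical
  refine Submodule.finiteDimensional_of_le
    (S₂ := Submodule.span k ((ℛ k q).index.image (ℛ k q).left : Set C)) ?_
  rintro _ ⟨f, rfl⟩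
  rw [orbitMap_apply, dualAct_comul_eq_sum f (ℛ k q)]
  exact Submodule.sum_mem _ fun i hi =>
    Submodule.smul_mem _ _ (Submodule.subset_span (Finset.mem_image_of_mem _ hi))

end Paper

/-- Let `q ∈ C` and `I = {f ∈ C* : f ⇀ q = 0}`. If `I` is the left
annihilator `l(X) = {f : ∀ x ∈ X, f * x = 0}` of some subset `X ⊆ C*`, then the cyclic left
`C*`-module generated by `q` (the right coideal of `C` generated by `q`, namely the span of
`{f ⇀ q}`) embeds in a free left `C*`-module of finite rank. -/
theorem stmt17 (k : Type) [Field k] (C : Type) [AddCommGroup C] [Module k C] [Coalgebra k C]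
    (q : C)
    (h : ∃ X : Set (Module.Dual k C),
      {f : Module.Dual k C | Paper.dualAct k C (Coalgebra.comul (R := k)) f q = 0} =
      {f : Module.Dual k C | ∀ x ∈ X, Paper.conv k C f x = 0}) :
    ∃ (n : ℕ)
      (Φ : Submodule.span k
          (Set.range fun f : Module.Dual k C =>
            Paper.dualAct k C (Coalgebra.comul (R := k)) f q) →ₗ[k]
        (Fin n → Module.Dual k C)),
      Function.Injective Φ ∧
      ∀ (f : Module.Dual k C) (x : C)
        (hx : x ∈ Submodule.span k (Set.range fun g : Module.Dual k C =>
          Paper.dualAct k C (Coalgebra.comul (R := k)) g q))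
        (hfx : Paper.dualAct k C (Coalgebra.comul (R := k)) f x ∈
          Submodule.span k (Set.range fun g : Module.Dual k C =>
            Paper.dualAct k C (Coalgebra.comul (R := k)) g q))
        (i : Fin n),
        Φ ⟨Paper.dualAct k C (Coalgebra.comul (R := k)) f x, hfx⟩ i =
          Paper.conv k C f (Φ ⟨x, hx⟩ i) := by
  obtain ⟨X, hX⟩ := h
  have hker : LinearMap.ker (Paper.orbitMap q) =
      ⨅ x : X, LinearMap.ker (Paper.convRight (x : Module.Dual k C)) := by
    ext f
    simp only [LinearMap.mem_ker, Submodule.mem_iInf, Paper.orbitMap_apply,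
      Paper.convRight_apply, Subtype.forall]
    exact Set.ext_iff.mp hX f
  obtain ⟨n, xs, hxs⟩ := LinearMap.exists_fin_ker_pi_eq_of_ker_eq_iInf _ _ hker
  rw [← Paper.range_orbitMap]
  refine ⟨n, (Paper.orbitMap q).rangeLift
    (LinearMap.pi fun j => Paper.convRight (xs j : Module.Dual k C)) hxs.ge,
    LinearMap.rangeLift_injective _ _ hxs.symm, ?_⟩
  rintro f _ ⟨g, rfl⟩ hfx j
  rw [LinearMap.rangeLift_apply (x := ⟨_, hfx⟩) _ _ _ (Paper.dualAct_conv f g q),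
    LinearMap.rangeLift_apply (a := g) _ _ _ rfl]
  simp only [LinearMap.pi_apply, Paper.convRight_apply, Paper.conv_assoc]
end
end

section
/- A finite direct sum (coproduct) of left quasi-coFrobenius coalgebras is left quasi-coFrobenius. -/
open TensorProduct

noncomputable section
/-!
The dual of `C = ⊕ Cᵢ` is `∏ Cᵢ*`, and extending a functional `g` on `Cᵢ` by zero, `g ∘ πᵢ`,
intertwines the action of `f ∈ C*` with that of its restriction `f|Cᵢ`: both
`(f ⇀ c)ᵢ = f|Cᵢ ⇀ cᵢ` and `f * (g ∘ πᵢ) = (f|Cᵢ * g) ∘ πᵢ`. So the embeddings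
`Cᵢ → (Cᵢ*)^(Iᵢ)` glue to a `C*`-linear embedding `C → (C*)^(Σ Iᵢ)`. Both identities come from the
naturality of `⇀` and `*` along linear maps commuting with the comultiplications, applied to the
inclusions `Cᵢ → C`.
-/

namespace Paper

open Coalgebra

section Naturality

variable {k : Type} [Field k] {B C : Type} [AddCommGroup B] [Module k B] [Coalgebra k B]
  [AddCommGroup C] [Module k C] [Coalgebra k C]
  (s : B →ₗ[k] C) (hs : comul ∘ₗ s = TensorProduct.map s s ∘ₗ comul)
include hs

theorem dualAct_comul_of_comul_comp (f : Module.Dual k C) (b : B) :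
    dualAct k C comul f (s b) = s (dualAct k B comul (f ∘ₗ s) b) := by
  have key : (TensorProduct.rid k C).toLinearMap ∘ₗ TensorProduct.map LinearMap.id f ∘ₗ
        TensorProduct.map s s
      = s ∘ₗ (TensorProduct.rid k B).toLinearMap ∘ₗ TensorProduct.map LinearMap.id (f ∘ₗ s) := by
    ext x y
    simp
  simpa [dualAct, ← LinearMap.comp_apply (TensorProduct.map s s), ← hs]
    using LinearMap.congr_fun key (comul b)

theorem conv_comp_of_comul_comp (f g : Module.Dual k C) :
    conv k C f g ∘ₗ s = conv k B (f ∘ₗ s) (g ∘ₗ s) := by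
  simp only [conv, LinearMap.comp_assoc, hs, TensorProduct.map_comp]

end Naturality

section DirectSum

variable {k : Type} [Field k] {ι : Type} {A : ι → Type}
  [∀ i, AddCommGroup (A i)] [∀ i, Module k (A i)]

variable {I : ι → Type} (Φ : ∀ i, A i →ₗ[k] (I i →₀ Module.Dual k (A i)))

def sigmaDualEmbedding : (Π₀ i, A i) →ₗ[k] ((Σ i, I i) →₀ Module.Dual k (Π₀ i, A i)) :=
  (sigmaFinsuppLequivDFinsupp k).symm.toLinearMap ∘ₗ DFinsupp.mapRange.linearMap fun i =>
    Finsupp.mapRange.linearMap (LinearMap.lcomp k k (DFinsupp.lapply i)) ∘ₗ Φ i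

theorem sigmaDualEmbedding_apply (c : Π₀ i, A i) (i : ι) (j : I i) :
    sigmaDualEmbedding Φ c ⟨i, j⟩ = Φ i (c i) j ∘ₗ DFinsupp.lapply i := by
  simp [sigmaDualEmbedding, LinearMap.lcomp_apply']

theorem sigmaDualEmbedding_injective (hΦ : ∀ i, Function.Injective (Φ i)) :
    Function.Injective (sigmaDualEmbedding Φ) := by
  classical
  have hlapply (i : ι) : Function.Surjective (DFinsupp.lapply (R := k) (M := A) i) :=
    fun a => ⟨DFinsupp.single i a, by simp⟩
  rw [sigmaDualEmbedding, LinearMap.coe_comp]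
  refine (LinearEquiv.injective _).comp ((DFinsupp.mapRange_injective _ fun _ => map_zero _).mpr fun i => ?_)
  exact (Finsupp.mapRange_injective _ (map_zero _)
    fun _ _ h => (LinearMap.cancel_right (hlapply i)).mp h).comp (hΦ i)

variable [DecidableEq ι] [∀ i, Coalgebra k (A i)]

theorem dualAct_comul_dfinsupp_apply (f : Module.Dual k (Π₀ i, A i)) (c : Π₀ i, A i) (i : ι) :
    dualAct k (Π₀ i, A i) comul f c i
      = dualAct k (A i) comul (f ∘ₗ DFinsupp.lsingle i) (c i) := by
  suffices DFinsupp.lapply i ∘ₗ dualAct k (Π₀ i, A i) comul f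
      = dualAct k (A i) comul (f ∘ₗ DFinsupp.lsingle i) ∘ₗ DFinsupp.lapply i from
    LinearMap.congr_fun this c
  refine DFinsupp.lhom_ext fun j a => ?_
  simp only [LinearMap.comp_apply, DFinsupp.lapply_apply]
  rw [← DFinsupp.lsingle_apply (R := k), dualAct_comul_of_comul_comp _ (DFinsupp.comul_comp_lsingle k ι A j)]
  obtain rfl | hji := eq_or_ne j i
  · simp
  · simp [DFinsupp.single_eq_of_ne hji.symm]

theorem conv_comp_lapply (f : Module.Dual k (Π₀ i, A i)) (i : ι) (g : Module.Dual k (A i)) :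
    conv k (Π₀ i, A i) f (g ∘ₗ DFinsupp.lapply i)
      = conv k (A i) (f ∘ₗ DFinsupp.lsingle i) g ∘ₗ DFinsupp.lapply i := by
  refine DFinsupp.lhom_ext' fun j => ?_
  rw [conv_comp_of_comul_comp _ (DFinsupp.comul_comp_lsingle k ι A j)]
  simp only [LinearMap.comp_assoc]
  obtain rfl | hij := eq_or_ne i j
  · simp only [DFinsupp.lapply_comp_lsingle_same, LinearMap.comp_id]
  · simp only [DFinsupp.lapply_comp_lsingle_of_ne _ _ hij, LinearMap.comp_zero, conv,
      TensorProduct.map_zero_right, LinearMap.zero_comp]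

end DirectSum

end Paper

theorem stmt19_general (k : Type) [Field k] (ι : Type) [DecidableEq ι]
    (A : ι → Type) [∀ i, AddCommGroup (A i)] [∀ i, Module k (A i)] [∀ i, Coalgebra k (A i)]
    (h : ∀ i, Paper.LeftQcF k (A i)) :
    Paper.LeftQcF k (Π₀ i, A i) := by
  choose I Φ hΦ hact using h
  refine ⟨Σ i, I i, Paper.sigmaDualEmbedding Φ, Paper.sigmaDualEmbedding_injective Φ hΦ, ?_⟩
  rintro f c ⟨i, j⟩
  rw [Paper.sigmaDualEmbedding_apply, Paper.sigmaDualEmbedding_apply,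
    Paper.dualAct_comul_dfinsupp_apply, hact, Paper.conv_comp_lapply]

/-- A finite direct sum (coproduct) of left quasi-coFrobenius coalgebras is
left quasi-coFrobenius. -/
theorem stmt19 (k : Type) [Field k] (ι : Type) [Fintype ι] [DecidableEq ι]
    (A : ι → Type) [∀ i, AddCommGroup (A i)] [∀ i, Module k (A i)] [∀ i, Coalgebra k (A i)]
    (h : ∀ i, Paper.LeftQcF k (A i)) :
    Paper.LeftQcF k (Π₀ i, A i) :=
  stmt19_general k ι A h
end
end
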